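/- Let $k$ be a field, $r \ge 1$, $n \ge 0$. The torus $(k^\times)^{n+1}$ acts on $\mathrm{GL}_r(k)^{n+1}$ coordinatewise by scalar multiplication, and this induces an action of the quotient torus $(k^\times)^{n+1}/k^\times$ (with $k^\times$ embedded diagonally) on the quotient $\mathrm{GL}_r(k)^{n+1}/\mathrm{GL}_r(k)$ by the diagonal right action of $\mathrm{GL}_r(k)$; this induced action is free. -/
import Mathlib


/-- The scalar matrix `λ·I` as an element of `GL_r(k)`. -/
noncomputable def scalarGL (k : Type*) [Field k] (r : ℕ) : kˣ →* GL (Fin r) k :=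
  Units.map (algebraMap k (Matrix (Fin r) (Fin r) k)).toMonoidHom

/-- The quotient torus `(kˣ)^{n+1}/kˣ` acts freely on `GL_r(k)^{n+1}/GL_r(k)`:
if the coordinatewise scalar multiple of a tuple lies in the same orbit of the
diagonal right `GL_r(k)`-action, then the scalar tuple is diagonal. -/
theorem torus_action_free_on_quotient (k : Type*) [Field k] (r n : ℕ) (hr : 1 ≤ r)
    (lam : Fin (n + 1) → kˣ) (g : Fin (n + 1) → GL (Fin r) k)
    (h : ∃ h : GL (Fin r) k, (fun i => scalarGL k r (lam i) * g i) = fun i => g i * h) :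
    ∃ mu : kˣ, lam = fun _ => mu := by
  obtain ⟨h, hh⟩ := h
  have key : ∀ i, scalarGL k r (lam i) = h := by
    intro i
    have h1 : scalarGL k r (lam i) * g i = g i * h := congrFun hh i
    have h2 : scalarGL k r (lam i) * g i = g i * scalarGL k r (lam i) := by
      apply Units.ext
      exact Algebra.commutes (lam i : k) ((g i : Matrix (Fin r) (Fin r) k))
    have := h2.symm.trans h1
    exact mul_left_cancel this
  have keq : ∀ i, (lam i : k) = (lam 0 : k) := by
    intro i
    have := (key i).trans (key 0).symm
    have hv := congrArg (fun u => (u : GL (Fin r) k).val ⟨0, hr⟩ ⟨0, hr⟩) this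
    simpa [scalarGL, Matrix.algebraMap_matrix_apply] using hv
  exact ⟨lam 0, funext fun i => Units.ext (keq i)⟩
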